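/- Combinatorial complexity is a homotopy invariant of finite spaces: if path connected finite T₀ spaces P and Q are homotopy equivalent (equivalently, have isomorphic cores), then CC(P) = CC(Q). -/

import Mathlib

open Set

/-- The finite fence poset `0 < 1 > 2 < ⋯ m` on `m+1` points. -/
def J (m : ℕ) : Type := Fin (m + 1)

namespace J

/-- The underlying natural number of a point of the fence. -/
def val {m : ℕ} (i : J m) : ℕ := @Fin.val (m + 1) i

instance (m : ℕ) : PartialOrder (J m) where
  le i j := i.val = j.val ∨ (j.val % 2 = 1 ∧ (j.val = i.val + 1 ∨ i.val = j.val + 1))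
  le_refl i := Or.inl rfl
  le_trans a b c h₁ h₂ := by
    show a.val = c.val ∨ (c.val % 2 = 1 ∧ (c.val = a.val + 1 ∨ a.val = c.val + 1))
    rcases h₁ with h₁ | h₁ <;> rcases h₂ with h₂ | h₂ <;> omega
  le_antisymm a b h₁ h₂ := by
    have : a.val = b.val := by rcases h₁ with h₁ | h₁ <;> rcases h₂ with h₂ | h₂ <;> omega
    exact @Fin.val_injective (m + 1) a b this

instance (m : ℕ) : Finite (J m) := inferInstanceAs (Finite (Fin (m + 1)))

/-- The initial point `0` of the fence. -/
def zero {m : ℕ} : J m := (0 : Fin (m + 1))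

/-- The terminal point `m` of the fence. -/
def last {m : ℕ} : J m := Fin.last m

end J

/-- The Alexandrov topology on a preordered set: open sets are the lower sets (ideals). -/
def alexTop (α : Type*) [Preorder α] : TopologicalSpace α where
  IsOpen s := IsLowerSet s
  isOpen_univ := isLowerSet_univ
  isOpen_inter _ _ := IsLowerSet.inter
  isOpen_sUnion _ := isLowerSet_sUnion

instance (m : ℕ) : TopologicalSpace (J m) := alexTop (J m)

/-- `P × P` can be covered by `n` open sets, each admitting a continuous section of
`q_m : P^{J_m} → P × P`, `γ ↦ (γ(0), γ(m))`. -/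
def hasCCCover (P : Type*) [TopologicalSpace P] (m n : ℕ) : Prop :=
  ∃ U : Fin n → Set (P × P), (∀ i, IsOpen (U i)) ∧ (⋃ i, U i) = Set.univ ∧
    ∀ i, ∃ s : C(U i, C(J m, P)),
      ∀ x : U i, (s x) J.zero = (x : P × P).1 ∧ (s x) J.last = (x : P × P).2

/-- The combinatorial complexity at length `m`. -/
noncomputable def CCm (P : Type*) [TopologicalSpace P] (m : ℕ) : ℕ∞ :=
  sInf ((↑) '' {n : ℕ | hasCCCover P m n})

/-- The combinatorial complexity `CC(P) = min_m CC_m(P)`. -/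
noncomputable def CC (P : Type*) [TopologicalSpace P] : ℕ∞ := ⨅ m, CCm P m

/-- `X × X` can be covered by `n` open sets, each admitting a continuous section of the
path fibration `X^I → X × X`. -/
def hasTCCover (X : Type*) [TopologicalSpace X] (n : ℕ) : Prop :=
  ∃ U : Fin n → Set (X × X), (∀ i, IsOpen (U i)) ∧ (⋃ i, U i) = Set.univ ∧
    ∀ i, ∃ s : C(U i, C(unitInterval, X)),
      ∀ x : U i, (s x) 0 = (x : X × X).1 ∧ (s x) 1 = (x : X × X).2

/-- Farber's topological complexity. -/
noncomputable def topComplexity (X : Type*) [TopologicalSpace X] : ℕ∞ :=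
  sInf ((↑) '' {n : ℕ | hasTCCover X n})

/-- A subset is contractible in the ambient space when its inclusion is null-homotopic. -/
def ContractibleIn {X : Type*} [TopologicalSpace X] (A : Set X) : Prop :=
  ∃ x₀ : X, ContinuousMap.Homotopic ⟨Subtype.val, continuous_subtype_val⟩
    (ContinuousMap.const A x₀)

/-- The (unreduced) Lusternik–Schnirelmann category. -/
noncomputable def cat (X : Type*) [TopologicalSpace X] : ℕ∞ :=
  sInf ((↑) '' {n : ℕ | ∃ U : Fin n → Set X, (∀ i, IsOpen (U i)) ∧ (⋃ i, U i) = Set.univ ∧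
    ∀ i, ContractibleIn (U i)})


/-!
A homotopy `H` between maps from a finite space into a poset with its Alexandrov topology is a
fence `H 0 = f₀ ≤ f₁ ≥ f₂ ≤ ⋯ fₖ = H 1` of pointwise comparable continuous maps: by finiteness
`H t' ≤ H t` for all `t'` near `t`, and `[0, 1]` is connected. Given `f : P → Q` and `g : Q → P`
with `g ∘ f ≃ id`, a continuous section `s` of `q_m` over an open `U ⊆ Q × Q` yields one of some
`q_{m'}` over `(f × f)⁻¹ U`: run from `p` along the fence to `g f p`, then along
`g ∘ s (f p, f p')`, then back along the fence to `p'`. For Alexandrov topologies continuity is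
monotonicity, which this construction preserves, so `CC P ≤ CC Q`; a homotopy equivalence gives
both inequalities.
-/

open Topology

namespace Topology.IsLowerSet

variable {X Y : Type*} [Preorder X] [Preorder Y] [TopologicalSpace X] [TopologicalSpace Y]

lemma of_isOpen_iff (h : ∀ s : Set X, IsOpen s ↔ IsLowerSet s) : Topology.IsLowerSet X :=
  ⟨TopologicalSpace.ext (funext fun s => propext (h s))⟩

instance prod [Topology.IsLowerSet X] [Topology.IsLowerSet Y] : Topology.IsLowerSet (X × Y) :=
  Topology.isLowerSet_iff_nhds.2 fun a => by
    rw [nhds_prod_eq, nhds_eq_principal_Iic, nhds_eq_principal_Iic,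
      Filter.prod_principal_principal, Set.Iic_prod_Iic]

instance subtype [Topology.IsLowerSet X] (p : X → Prop) : Topology.IsLowerSet (Subtype p) :=
  Topology.isLowerSet_iff_nhds.2 fun a => by
    rw [nhds_induced, nhds_eq_principal_Iic, Filter.comap_principal]
    rfl

end Topology.IsLowerSet

instance (m : ℕ) : Topology.IsLowerSet (J m) := ⟨rfl⟩

section ContinuousMap

variable {X Y Z : Type*} [Preorder X] [Preorder Z]
  [TopologicalSpace X] [TopologicalSpace Y] [TopologicalSpace Z]
  [Topology.IsLowerSet X] [Topology.IsLowerSet Z]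

lemma ContinuousMap.monotone (f : C(X, Z)) : Monotone f :=
  IsLowerSet.monotone_iff_continuous.2 f.continuous

lemma ContinuousMap.monotone_coeFn (s : C(X, C(Y, Z))) : Monotone fun x => ⇑(s x) :=
  fun _ _ h y =>
    IsLowerSet.monotone_iff_continuous.2 ((continuous_eval_const y).comp s.continuous) h

lemma exists_continuousMap_curry_of_monotone [Preorder Y] [Topology.IsLowerSet Y]
    {G : X → Y → Z} (hG : Monotone G) (hGx : ∀ x, Monotone (G x)) :
    ∃ s : C(X, C(Y, Z)), ∀ x y, s x y = G x y :=
  ⟨ContinuousMap.curry ⟨Function.uncurry G, IsLowerSet.monotone_iff_continuous.1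
    (monotone_prod_iff.2 ⟨hGx, fun y _ _ h => hG h y⟩)⟩, fun _ _ => rfl⟩

end ContinuousMap

namespace J

variable {m n : ℕ}

lemma le_iff {i j : J m} :
    i ≤ j ↔ i.val = j.val ∨ (j.val % 2 = 1 ∧ (j.val = i.val + 1 ∨ i.val = j.val + 1)) :=
  Iff.rfl

lemma val_le (i : J m) : i.val ≤ m := Nat.lt_succ_iff.mp (@Fin.isLt (m + 1) i)

lemma ext {i j : J m} (h : i.val = j.val) : i = j := @Fin.val_injective (m + 1) i j h

@[simp] lemma val_zero : (J.zero : J m).val = 0 := rfl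

@[simp] lemma val_last : (J.last : J m).val = m := rfl

def mk (i : ℕ) (h : i ≤ m) : J m := (⟨i, Nat.lt_succ_of_le h⟩ : Fin (m + 1))

@[simp] lemma val_mk (i : ℕ) (h : i ≤ m) : (mk i h : J m).val = i := rfl

lemma zero_eq_last_of_eq_zero (h : m = 0) : (J.zero : J m) = J.last := ext (by simp [h])

def clamp (m : ℕ) (t : J n) : J m := mk (min t.val m) (min_le_right _ _)

lemma monotone_clamp : Monotone (clamp m : J n → J m) := by
  intro i j h
  simp only [clamp, le_iff, val_mk] at h ⊢
  omega

@[simp] lemma clamp_zero : clamp m (J.zero : J n) = J.zero := ext (by simp [clamp])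

lemma clamp_last (h : m ≤ n) : clamp m (J.last : J n) = J.last := ext (by simp [clamp, h])

variable {α : Type*}

def concat (γ : J m → α) (δ : J n → α) (t : J (m + n)) : α :=
  if h : t.val ≤ m then γ (mk t.val h) else δ (mk (t.val - m) (by have := t.val_le; omega))

lemma concat_zero (γ : J m → α) (δ : J n → α) : concat γ δ J.zero = γ J.zero :=
  dif_pos (Nat.zero_le _)

lemma concat_last {γ : J m → α} {δ : J n → α} (h : γ J.last = δ J.zero) :
    concat γ δ J.last = δ J.last := by
  unfold concat
  split_ifs with hn
  · have hn : n = 0 := by simp only [val_last] at hn; omega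
    rw [← zero_eq_last_of_eq_zero hn, ← h]
    exact congrArg γ (ext (by simp [hn]))
  · exact congrArg δ (ext (by simp))

/-- `Even m` puts the junction at a local minimum of `J (m + n)`, as `δ` expects. -/
lemma monotone_concat [Preorder α] {γ : J m → α} {δ : J n → α} (hm : Even m) (hγ : Monotone γ)
    (hδ : Monotone δ) (h : γ J.last = δ J.zero) : Monotone (concat γ δ) := by
  rw [Nat.even_iff] at hm
  intro i j hij
  rw [le_iff] at hij
  unfold concat
  split_ifs with hi hj hj
  · exact hγ (by simpa [le_iff] using hij)
  · calc γ (mk i.val hi) = γ J.last := congrArg γ (ext (by simp only [val_mk, val_last]; omega))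
      _ = δ J.zero := h
      _ ≤ δ _ := hδ (by simp only [le_iff, val_zero, val_mk]; omega)
  · omega
  · exact hδ (by simp only [le_iff, val_mk]; omega)

lemma concat_mono [Preorder α] {γ γ' : J m → α} {δ δ' : J n → α} (hγ : γ ≤ γ') (hδ : δ ≤ δ') :
    concat γ δ ≤ concat γ' δ' := by
  intro t
  unfold concat
  split_ifs
  exacts [hγ _, hδ _]

end J

section Zigzag

open Relation

variable {α : Type*} [Preorder α]

lemma Relation.SymmGen.exists_monotone_path {a b : α} (h : SymmGen (· ≤ ·) a b) :
    ∃ γ : J 2 → α, Monotone γ ∧ γ J.zero = a ∧ γ J.last = b := by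
  rcases h with hab | hba
  · refine ⟨fun t => if t.val = 0 then a else b, fun i j hij => ?_, by simp, by simp⟩
    rw [J.le_iff] at hij
    dsimp only
    split_ifs <;> first | rfl | exact hab | omega
  · refine ⟨fun t => if t.val = 2 then b else a, fun i j hij => ?_, by simp, by simp⟩
    rw [J.le_iff] at hij
    dsimp only
    split_ifs <;> first | rfl | exact hba | omega

lemma exists_monotone_path_of_reflTransGen {a b : α} (h : ReflTransGen (SymmGen (· ≤ ·)) a b) :
    ∃ n, Even n ∧ ∃ γ : J n → α, Monotone γ ∧ γ J.zero = a ∧ γ J.last = b := by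
  induction h with
  | refl => exact ⟨0, Even.zero, fun _ => a, monotone_const, rfl, rfl⟩
  | tail _ hbc ih =>
    obtain ⟨n, hn, γ, hγ, hγ0, hγ1⟩ := ih
    obtain ⟨δ, hδ, hδ0, hδ1⟩ := hbc.exists_monotone_path
    have hjoin : γ J.last = δ J.zero := hγ1.trans hδ0.symm
    exact ⟨n + 2, hn.add even_two, J.concat γ δ, J.monotone_concat hn hγ hδ hjoin,
      (J.concat_zero γ δ).trans hγ0, (J.concat_last hjoin).trans hδ1⟩

theorem ContinuousMap.Homotopic.reflTransGen_symmGen {X Y : Type*} [TopologicalSpace X]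
    [Finite X] [TopologicalSpace Y] [PartialOrder Y] [Topology.IsLowerSet Y] {u v : C(X, Y)}
    (h : u.Homotopic v) : ReflTransGen (SymmGen (· ≤ ·)) u v := by
  obtain ⟨H⟩ := h
  have hloc (t : unitInterval) : ∀ᶠ t' in 𝓝 t, H.curry t' ≤ H.curry t := by
    refine (Filter.eventually_all.2 fun y => ?_).mono fun t' ht' => ContinuousMap.le_def.2 ht'
    exact (H.continuous.comp (Continuous.prodMk_left y)).continuousAt.eventually_mem
      (by rw [IsLowerSet.nhds_eq_principal_Iic]; exact Filter.mem_principal_self _)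
  have := PreconnectedSpace.induction₂'
    (fun t t' => ReflTransGen (SymmGen (· ≤ ·)) (H.curry t) (H.curry t'))
    (fun t => (hloc t).mono fun _ ht' => ⟨.single (.of_ge ht'), .single (.of_le ht')⟩)
    ⟨fun _ _ _ => .trans⟩ 0 1
  simpa using this

end Zigzag

section Transfer

variable {P Q : Type*} [TopologicalSpace P] {k₁ k₂ n : ℕ}
  {σ₁ : J k₁ → C(P, P)} {σ₂ : J k₂ → C(P, P)} {g : Q → P}

variable (σ₁ σ₂ g) in
def transferPath (γ : J n → Q) (p p' : P) : J (k₁ + n + k₂) → P :=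
  J.concat (J.concat (fun t => σ₁ t p) (g ∘ γ)) (fun t => σ₂ t p')

variable {γ γ' : J n → Q} {p p' p₂ p₂' : P}

lemma monotone_transferPath [PartialOrder P] [Preorder Q] (hk₁ : Even k₁) (hn : Even n)
    (hσ₁ : Monotone σ₁) (hσ₂ : Monotone σ₂) (hg : Monotone g) (hγ : Monotone γ)
    (h₁ : σ₁ J.last p = g (γ J.zero)) (h₂ : g (γ J.last) = σ₂ J.zero p') :
    Monotone (transferPath σ₁ σ₂ g γ p p') :=
  J.monotone_concat (hk₁.add hn) (J.monotone_concat hk₁ (fun _ _ h => hσ₁ h p) (hg.comp hγ) h₁)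
    (fun _ _ h => hσ₂ h p') (by rwa [J.concat_last h₁])

lemma transferPath_mono [Preorder P] [Preorder Q] [Topology.IsLowerSet P] (hg : Monotone g)
    (hγ : γ ≤ γ') (hp : p ≤ p₂) (hp' : p' ≤ p₂') :
    transferPath σ₁ σ₂ g γ p p' ≤ transferPath σ₁ σ₂ g γ' p₂ p₂' :=
  J.concat_mono (J.concat_mono (fun t => (σ₁ t).monotone hp) (fun t => hg (hγ t)))
    (fun t => (σ₂ t).monotone hp')

lemma transferPath_zero (h₀ : σ₁ J.zero = ContinuousMap.id P) :
    transferPath σ₁ σ₂ g γ p p' J.zero = p := by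
  simp [transferPath, J.concat_zero, h₀]

lemma transferPath_last (h₁ : σ₁ J.last p = g (γ J.zero)) (h₂ : g (γ J.last) = σ₂ J.zero p')
    (h₀ : σ₂ J.last = ContinuousMap.id P) : transferPath σ₁ σ₂ g γ p p' J.last = p' := by
  rw [transferPath, J.concat_last (by rwa [J.concat_last h₁]), h₀]
  rfl

end Transfer

section Cover

variable {P Q : Type*} [PartialOrder P] [Preorder Q] [TopologicalSpace P] [TopologicalSpace Q]
  [Topology.IsLowerSet P] [Topology.IsLowerSet Q]

lemma exists_section_preimage {k₁ k₂ m : ℕ} (hk₁ : Even k₁) {f : C(P, Q)} {g : C(Q, P)}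
    {σ₁ : J k₁ → C(P, P)} {σ₂ : J k₂ → C(P, P)} (hσ₁ : Monotone σ₁) (hσ₂ : Monotone σ₂)
    (hσ₁0 : σ₁ J.zero = ContinuousMap.id P) (hσ₁1 : σ₁ J.last = g.comp f)
    (hσ₂0 : σ₂ J.zero = g.comp f) (hσ₂1 : σ₂ J.last = ContinuousMap.id P)
    {U : Set (Q × Q)} (s : C(U, C(J m, Q)))
    (hs : ∀ x : U, s x J.zero = (x : Q × Q).1 ∧ s x J.last = (x : Q × Q).2) :
    ∃ s' : C(Prod.map f f ⁻¹' U, C(J (k₁ + 2 * m + k₂), P)),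
      ∀ x, s' x J.zero = (x : P × P).1 ∧ s' x J.last = (x : P × P).2 := by
  let fU := (f.prodMap f).restrictPreimage U
  let sf := s.comp fU
  let γ : Prod.map f f ⁻¹' U → J (2 * m) → Q := fun x t => sf x (J.clamp m t)
  have hγ : Monotone γ := fun x y hxy t => sf.monotone_coeFn hxy _
  have hγx (x) : Monotone (γ x) := (sf x).monotone.comp J.monotone_clamp
  have h₁ (x : Prod.map f f ⁻¹' U) : σ₁ J.last x.1.1 = g (γ x J.zero) := by
    simp only [γ, J.clamp_zero, hσ₁1, ContinuousMap.comp_apply]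
    exact (congrArg g (hs (fU x)).1).symm
  have h₂ (x : Prod.map f f ⁻¹' U) : g (γ x J.last) = σ₂ J.zero x.1.2 := by
    simp only [γ, J.clamp_last (Nat.le_mul_of_pos_left m two_pos), hσ₂0, ContinuousMap.comp_apply]
    exact congrArg g (hs (fU x)).2
  obtain ⟨s', hs'⟩ := exists_continuousMap_curry_of_monotone
    (G := fun x => transferPath σ₁ σ₂ g (γ x) x.1.1 x.1.2)
    (fun x y hxy => transferPath_mono g.monotone (hγ hxy) hxy.1 hxy.2)
    (fun x => monotone_transferPath hk₁ (even_two_mul m) hσ₁ hσ₂ g.monotone (hγx x) (h₁ x) (h₂ x))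
  refine ⟨s', fun x => ?_⟩
  rw [hs', hs']
  exact ⟨transferPath_zero hσ₁0, transferPath_last (h₁ x) (h₂ x) hσ₂1⟩

lemma exists_hasCCCover_of_homotopic [Finite P] {f : C(P, Q)} {g : C(Q, P)}
    (hgf : (g.comp f).Homotopic (ContinuousMap.id P)) {m n : ℕ} (hQ : hasCCCover Q m n) :
    ∃ m', hasCCCover P m' n := by
  have hfence := hgf.reflTransGen_symmGen
  obtain ⟨k₁, hk₁, σ₁, hσ₁, hσ₁0, hσ₁1⟩ :=
    exists_monotone_path_of_reflTransGen (Std.Symm.symm _ _ hfence)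
  obtain ⟨k₂, -, σ₂, hσ₂, hσ₂0, hσ₂1⟩ := exists_monotone_path_of_reflTransGen hfence
  obtain ⟨U, hUopen, hUcover, hUsection⟩ := hQ
  refine ⟨k₁ + 2 * m + k₂, fun i => Prod.map f f ⁻¹' U i,
    fun i => (hUopen i).preimage (f.prodMap f).continuous, ?_, fun i => ?_⟩
  · rw [← Set.preimage_iUnion, hUcover, Set.preimage_univ]
  · obtain ⟨s, hs⟩ := hUsection i
    exact exists_section_preimage hk₁ hσ₁ hσ₂ hσ₁0 hσ₁1 hσ₂0 hσ₂1 s hs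

lemma CC_le_of_homotopic [Finite P] {f : C(P, Q)} {g : C(Q, P)}
    (hgf : (g.comp f).Homotopic (ContinuousMap.id P)) : CC P ≤ CC Q := by
  refine le_iInf fun m => le_sInf ?_
  rintro _ ⟨n, hn, rfl⟩
  obtain ⟨m', hm'⟩ := exists_hasCCCover_of_homotopic hgf hn
  exact (iInf_le _ m').trans (sInf_le ⟨n, hm', rfl⟩)

end Cover

theorem CC_homotopy_invariant_general
    (P Q : Type) [PartialOrder P] [PartialOrder Q] [Finite P] [Finite Q]
    [TopologicalSpace P] [TopologicalSpace Q]
    (hP : ∀ s : Set P, IsOpen s ↔ IsLowerSet s)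
    (hQ : ∀ s : Set Q, IsOpen s ↔ IsLowerSet s)
    (h : Nonempty (ContinuousMap.HomotopyEquiv P Q)) :
    CC P = CC Q := by
  have := Topology.IsLowerSet.of_isOpen_iff hP
  have := Topology.IsLowerSet.of_isOpen_iff hQ
  obtain ⟨e⟩ := h
  exact le_antisymm (CC_le_of_homotopic e.left_inv) (CC_le_of_homotopic e.right_inv)

/-- Combinatorial complexity is a homotopy invariant of finite spaces. -/
theorem CC_homotopy_invariant
    (P Q : Type) [PartialOrder P] [PartialOrder Q] [Finite P] [Finite Q]
    [TopologicalSpace P] [TopologicalSpace Q]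
    [PathConnectedSpace P] [PathConnectedSpace Q]
    (hP : ∀ s : Set P, IsOpen s ↔ IsLowerSet s)
    (hQ : ∀ s : Set Q, IsOpen s ↔ IsLowerSet s)
    (h : Nonempty (ContinuousMap.HomotopyEquiv P Q)) :
    CC P = CC Q :=
  CC_homotopy_invariant_general P Q hP hQ h
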